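/- For every integer K ≥ 2, ∑_{j=1}^{⌊(K−1)/2⌋} f(2j)·(K − 2j) ≤ K²/(4C₂). -/

import Mathlib

open Filter Finset Real

/-- The twin prime constant `C₂ = ∏_{p>2} (1 - 1/(p-1)²)`. -/
noncomputable def twinC : ℝ :=
  ∏' p : Nat.Primes, if 2 < (p : ℕ) then (1 - 1 / (((p : ℕ) : ℝ) - 1) ^ 2) else 1

/-- The singular series `𝔖(d) = 2C₂ ∏_{p|d, p>2} (1 + 1/(p-2))`. -/
noncomputable def singSeries (d : ℕ) : ℝ :=
  2 * twinC * ∏ p ∈ d.primeFactors.filter (fun p => 2 < p), (1 + 1 / ((p : ℝ) - 2))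

/-- `K(N) = ⌊log₂ N - 2 log₂ (log N)⌋`. -/
noncomputable def Kf (N : ℕ) : ℕ :=
  ⌊Real.log N / Real.log 2 - 2 * Real.log (Real.log N) / Real.log 2⌋₊

/-- `d(k₂, h) = 2^{k₂} (2^h - 1) - h`. -/
def dd (k₂ h : ℕ) : ℕ := 2 ^ k₂ * (2 ^ h - 1) - h

/-- `Φ(N) = (1/K²) ∑_{1≤h≤K-1, h even} ∑_{1≤k₂≤K-h} 𝔖(d(k₂,h))`. -/
noncomputable def Phi (N : ℕ) : ℝ :=
  (1 / (Kf N : ℝ) ^ 2) *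
    ∑ h ∈ (Finset.Icc 1 (Kf N - 1)).filter (fun h => Even h),
      ∑ k₂ ∈ Finset.Icc 1 (Kf N - h), singSeries (dd k₂ h)

/-- The multiplicative function `g` supported on odd squarefree integers with
`g(p) = 1/(p-2)` for odd primes. -/
noncomputable def gfun (n : ℕ) : ℝ :=
  if Squarefree n ∧ Odd n then ∏ p ∈ n.primeFactors, (1 / ((p : ℝ) - 2)) else 0

/-- The Romanov-type constant `C_Rom = ∑_{β odd squarefree} g(β)/ord_β(2)`.
(`gfun` vanishes off odd squarefree integers; `ord_β(2)` is `orderOf (2 : ZMod β)`.) -/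
noncomputable def CRom : ℝ := ∑' β : ℕ, gfun β / (orderOf (2 : ZMod β) : ℝ)

/-- `R(N)`: integers `n ≤ N` with `n = m + k`, `k, m ≥ 1` and `2^k + m` prime. -/
def RSet (N : ℕ) : Set ℕ :=
  {n | n ≤ N ∧ ∃ k m : ℕ, 1 ≤ k ∧ 1 ≤ m ∧ n = m + k ∧ Nat.Prime (2 ^ k + m)}

/-- `c_k = 2^k - k`. -/
def ck (k : ℕ) : ℕ := 2 ^ k - k

/-- `r(n) = #{1 ≤ k ≤ K : n + c_k prime}`. -/
noncomputable def rfun (N n : ℕ) : ℕ :=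
  ((Finset.Icc 1 (Kf N)).filter (fun k => Nat.Prime (n + ck k))).card

/-- `S₁(N) = ∑_{K+1 ≤ n ≤ N} r(n)`. -/
noncomputable def S1 (N : ℕ) : ℕ := ∑ n ∈ Finset.Icc (Kf N + 1) N, rfun N n

/-- `S₂(N) = ∑_{K+1 ≤ n ≤ N} r(n)²`. -/
noncomputable def S2 (N : ℕ) : ℕ := ∑ n ∈ Finset.Icc (Kf N + 1) N, (rfun N n) ^ 2

/-- The index set `I_K = {(k₂, h) : 1 ≤ h ≤ K-1, h even, 1 ≤ k₂ ≤ K-h}`. -/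
def IK (K : ℕ) : Finset (ℕ × ℕ) :=
  (Finset.Icc 1 K ×ˢ Finset.Icc 1 K).filter
    (fun q => Even q.2 ∧ q.2 ≤ K - 1 ∧ q.1 ≤ K - q.2)

/-- `f(d) = ∏_{p|d, p>2} (p-1)/(p-2)`. -/
noncomputable def ffun (d : ℕ) : ℝ :=
  ∏ p ∈ d.primeFactors.filter (fun p => 2 < p), (((p : ℝ) - 1) / ((p : ℝ) - 2))

/-- `f_P(d) = ∏_{p|d, 2<p≤P} (p-1)/(p-2)`. -/
noncomputable def fP (P d : ℕ) : ℝ :=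
  ∏ p ∈ d.primeFactors.filter (fun p => 2 < p ∧ p ≤ P), (((p : ℝ) - 1) / ((p : ℝ) - 2))

/-- `D(N) = ∑_{1≤k₁,k₂≤K, k₁≠k₂} #{K+1 ≤ n ≤ N : n + c_{k₁}, n + c_{k₂} both prime}`. -/
noncomputable def DN (N : ℕ) : ℕ :=
  ∑ q ∈ (Finset.Icc 1 (Kf N) ×ˢ Finset.Icc 1 (Kf N)).filter (fun q => q.1 ≠ q.2),
    ((Finset.Icc (Kf N + 1) N).filter
      (fun n => Nat.Prime (n + ck q.1) ∧ Nat.Prime (n + ck q.2))).card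

/-- `π_d(x) = #{primes p ≤ x : p + d also prime}`. -/
noncomputable def piPairs (d : ℕ) (x : ℝ) : ℕ :=
  {p : ℕ | p.Prime ∧ (p : ℝ) ≤ x ∧ Nat.Prime (p + d)}.ncard

section AuxTwinC

noncomputable def auxF (p : Nat.Primes) : ℝ :=
  if 2 < (p : ℕ) then (1 - 1 / (((p : ℕ) : ℝ) - 1) ^ 2) else 1

lemma auxF_nonneg (p : Nat.Primes) : 0 ≤ auxF p := by
  unfold auxF
  split_ifs with h
  · have h3 : (3 : ℝ) ≤ ((p : ℕ) : ℝ) := by exact_mod_cast h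
    have hle : 1 / (((p : ℕ) : ℝ) - 1) ^ 2 ≤ 1 / 4 := by
      rw [div_le_div_iff₀ (by nlinarith) (by norm_num)]
      nlinarith
    linarith
  · norm_num

lemma auxF_le_one (p : Nat.Primes) : auxF p ≤ 1 := by
  unfold auxF
  split_ifs with h
  · have : 0 ≤ 1 / (((p : ℕ) : ℝ) - 1) ^ 2 := by positivity
    linarith
  · exact le_refl 1

lemma auxProd_anti : Antitone (fun s : Finset Nat.Primes => ∏ p ∈ s, auxF p) := by
  intro s t h
  calc ∏ p ∈ t, auxF p = (∏ p ∈ t \ s, auxF p) * ∏ p ∈ s, auxF p :=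
        (Finset.prod_sdiff h).symm
    _ ≤ 1 * ∏ p ∈ s, auxF p := by
        refine mul_le_mul_of_nonneg_right ?_ (Finset.prod_nonneg fun p _ => auxF_nonneg p)
        exact Finset.prod_le_one (fun p _ => auxF_nonneg p) (fun p _ => auxF_le_one p)
    _ = ∏ p ∈ s, auxF p := one_mul _

lemma auxBdd : BddBelow (Set.range (fun s : Finset Nat.Primes => ∏ p ∈ s, auxF p)) := by
  refine ⟨0, ?_⟩
  rintro x ⟨s, rfl⟩
  exact Finset.prod_nonneg fun p _ => auxF_nonneg p

lemma auxHasProd : HasProd auxF (⨅ s : Finset Nat.Primes, ∏ p ∈ s, auxF p) :=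
  tendsto_atTop_ciInf auxProd_anti auxBdd

lemma twinC_eq : twinC = ⨅ s : Finset Nat.Primes, ∏ p ∈ s, auxF p :=
  auxHasProd.tprod_eq

lemma twinC_le_prod (s : Finset Nat.Primes) : twinC ≤ ∏ p ∈ s, auxF p := by
  rw [twinC_eq]; exact ciInf_le auxBdd s

lemma one_sub_sum_le_prod {ι : Type*} (s : Finset ι) (x : ι → ℝ) :
    (∀ i ∈ s, 0 ≤ x i) → (∀ i ∈ s, x i ≤ 1) →
    1 - ∑ i ∈ s, x i ≤ ∏ i ∈ s, (1 - x i) := by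
  classical
  induction s using Finset.cons_induction with
  | empty => simp
  | cons a s ha ih =>
    intro h0 h1
    rw [Finset.prod_cons, Finset.sum_cons]
    have hs0 : 0 ≤ ∑ i ∈ s, x i :=
      Finset.sum_nonneg fun i hi => h0 i (Finset.mem_cons_of_mem hi)
    have h' := ih (fun i hi => h0 i (Finset.mem_cons_of_mem hi))
      (fun i hi => h1 i (Finset.mem_cons_of_mem hi))
    have ha0 : 0 ≤ x a := h0 a (Finset.mem_cons_self a s)
    have ha1 : x a ≤ 1 := h1 a (Finset.mem_cons_self a s)
    have step : (1 - x a) * (1 - ∑ i ∈ s, x i) ≤ (1 - x a) * ∏ i ∈ s, (1 - x i) :=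
      mul_le_mul_of_nonneg_left h' (by linarith)
    nlinarith [mul_nonneg ha0 hs0]

lemma telescope_aux : ∀ d : ℕ,
    ∑ n ∈ Finset.Icc 3 (4 + d), (1 / ((n : ℝ) - 1) ^ 2)
      ≤ 25 / 36 - 1 / (((4 + d : ℕ) : ℝ) - 1) := by
  intro d
  induction d with
  | zero =>
    norm_num [show Finset.Icc 3 4 = {3, 4} from rfl]
  | succ d ih =>
    have h45 : 4 + (d + 1) = (4 + d) + 1 := by omega
    have hX : (0 : ℝ) ≤ (d : ℝ) := Nat.cast_nonneg d
    have e1 : ((4 + d + 1 : ℕ) : ℝ) - 1 = (d : ℝ) + 4 := by push_cast; ring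
    have e2 : ((4 + d : ℕ) : ℝ) - 1 = (d : ℝ) + 3 := by push_cast; ring
    rw [h45, Finset.sum_Icc_succ_top (by omega), e1]
    rw [e2] at ih
    have key : (1 : ℝ) / ((d : ℝ) + 4) ^ 2 ≤ 1 / ((d : ℝ) + 3) - 1 / ((d : ℝ) + 4) := by
      rw [div_sub_div _ _ (by linarith) (by linarith),
        div_le_div_iff₀ (by nlinarith) (by nlinarith)]
      nlinarith
    linarith

lemma sumIcc3_le (N : ℕ) : ∑ n ∈ Finset.Icc 3 N, (1 / ((n : ℝ) - 1) ^ 2) ≤ 25 / 36 := by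
  rcases le_or_gt N 3 with h | h
  · rcases Nat.lt_or_ge N 3 with h2 | h2
    · rw [Finset.Icc_eq_empty (by omega)]
      norm_num
    · have : N = 3 := le_antisymm h h2
      subst this
      norm_num [show Finset.Icc 3 3 = {3} from rfl]
  · obtain ⟨d, rfl⟩ : ∃ d, N = 4 + d := ⟨N - 4, by omega⟩
    have h1 := telescope_aux d
    have h2 : (0:ℝ) < ((4 + d : ℕ) : ℝ) - 1 := by push_cast; linarith [Nat.cast_nonneg (α := ℝ) d]
    have : 0 < 1 / (((4 + d : ℕ) : ℝ) - 1) := by positivity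
    linarith

lemma prod_auxF_ge (s : Finset Nat.Primes) : 11 / 36 ≤ ∏ p ∈ s, auxF p := by
  classical
  have hsplit : ∏ p ∈ s, auxF p = ∏ p ∈ s.filter (fun p : Nat.Primes => 2 < (p : ℕ)), auxF p := by
    rw [← Finset.prod_filter_mul_prod_filter_not s (fun p : Nat.Primes => 2 < (p : ℕ))]
    have h1 : ∏ p ∈ s.filter (fun p : Nat.Primes => ¬ 2 < (p : ℕ)), auxF p = 1 :=
      Finset.prod_eq_one fun p hp => by
        simp [auxF, (Finset.mem_filter.mp hp).2]
    rw [h1, mul_one]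
  rw [hsplit]
  set s3 := s.filter (fun p : Nat.Primes => 2 < (p : ℕ)) with hs3
  have hmem : ∀ p ∈ s3, 2 < (p : ℕ) := fun p hp => (Finset.mem_filter.mp hp).2
  have hprod : ∏ p ∈ s3, auxF p = ∏ p ∈ s3, (1 - 1 / (((p : ℕ) : ℝ) - 1) ^ 2) :=
    Finset.prod_congr rfl fun p hp => if_pos (hmem p hp)
  rw [hprod]
  have hW := one_sub_sum_le_prod s3 (fun p => 1 / (((p : ℕ) : ℝ) - 1) ^ 2)
    (fun p _ => by positivity)
    (fun p hp => by
      have h3 : (3 : ℝ) ≤ ((p : ℕ) : ℝ) := by exact_mod_cast hmem p hp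
      rw [div_le_one (by nlinarith)]
      nlinarith)
  have hsum : ∑ p ∈ s3, (1 / (((p : ℕ) : ℝ) - 1) ^ 2) ≤ 25 / 36 := by
    have himg : ∑ p ∈ s3, (1 / (((p : ℕ) : ℝ) - 1) ^ 2)
        = ∑ n ∈ s3.image (fun p : Nat.Primes => (p : ℕ)), (1 / ((n : ℝ) - 1) ^ 2) := by
      rw [Finset.sum_image (fun a _ b _ h => (Nat.Primes.coe_nat_inj a b).mp h)]
    rw [himg]
    have hsub : s3.image (fun p : Nat.Primes => (p : ℕ))
        ⊆ Finset.Icc 3 ((s3.image (fun p : Nat.Primes => (p : ℕ))).sup id) := by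
      intro n hn
      obtain ⟨p, hp, rfl⟩ := Finset.mem_image.mp hn
      exact Finset.mem_Icc.mpr ⟨hmem p hp, Finset.le_sup (f := id) hn⟩
    refine le_trans (Finset.sum_le_sum_of_subset_of_nonneg hsub fun n _ _ => by positivity) ?_
    exact sumIcc3_le _
  linarith

lemma twinC_pos : 0 < twinC := by
  rw [twinC_eq]
  have : (11 / 36 : ℝ) ≤ ⨅ s : Finset Nat.Primes, ∏ p ∈ s, auxF p :=
    le_ciInf prod_auxF_ge
  linarith

lemma twinC_le_prod_nat (Q : Finset ℕ) (hQ : ∀ p ∈ Q, p.Prime ∧ 2 < p) :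
    twinC ≤ ∏ p ∈ Q, (1 - 1 / ((p : ℝ) - 1) ^ 2) := by
  classical
  have hinj : Set.InjOn (fun p : Nat.Primes => (p : ℕ))
      ((fun p : Nat.Primes => (p : ℕ)) ⁻¹' ↑Q) := fun a _ b _ h => Subtype.ext h
  have hpre := Finset.prod_preimage (fun p : Nat.Primes => (p : ℕ)) Q hinj
    (fun n => 1 - 1 / ((n : ℝ) - 1) ^ 2)
    (fun x hx hnx => absurd ⟨⟨x, (hQ x hx).1⟩, rfl⟩ hnx)
  rw [← hpre]
  refine le_trans (twinC_le_prod _) (le_of_eq (Finset.prod_congr rfl fun p hp => ?_))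
  have h2 : 2 < (p : ℕ) := (hQ _ (Finset.mem_preimage.mp hp)).2
  simp [auxF, h2]

end AuxTwinC


lemma squarefree_prod_primes {T : Finset ℕ} (hT : ∀ p ∈ T, p.Prime) :
    Squarefree (∏ p ∈ T, p) := by
  classical
  induction T using Finset.cons_induction with
  | empty => simpa using squarefree_one
  | cons a T ha ih =>
    rw [Finset.prod_cons]
    have hprime := hT a (Finset.mem_cons_self a T)
    have hrest : ∀ p ∈ T, p.Prime := fun p hp => hT p (Finset.mem_cons_of_mem hp)
    rw [Nat.squarefree_mul_iff]
    refine ⟨?_, hprime.squarefree, ih hrest⟩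
    rw [hprime.coprime_iff_not_dvd]
    intro hdvd
    obtain ⟨q, hq, hq2⟩ := (hprime.prime.dvd_finset_prod_iff id).mp hdvd
    rw [(Nat.prime_dvd_prime_iff_eq hprime (hrest q hq)).mp hq2] at ha
    exact ha hq

lemma gfun_nonneg (m : ℕ) : 0 ≤ gfun m := by
  unfold gfun
  split_ifs with h
  · refine Finset.prod_nonneg fun p hp => ?_
    have h2 : 2 ≤ p := (Nat.prime_of_mem_primeFactors hp).two_le
    have : (2 : ℝ) ≤ (p : ℝ) := by exact_mod_cast h2
    exact one_div_nonneg.mpr (by linarith)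
  · exact le_refl 0

lemma ffun_eq {j : ℕ} (hj : j ≠ 0) :
    ffun (2 * j) = ∑ m ∈ j.divisors, gfun m := by
  classical
  have hset : (2 * j).primeFactors.filter (fun p => 2 < p)
      = j.primeFactors.filter (fun p => 2 < p) := by
    ext p
    simp only [Finset.mem_filter, Nat.primeFactors_mul two_ne_zero hj, Finset.mem_union,
      Nat.prime_two.primeFactors, Finset.mem_singleton]
    constructor
    · rintro ⟨h | h, h2⟩
      · omega
      · exact ⟨h, h2⟩
    · rintro ⟨h, h2⟩; exact ⟨Or.inr h, h2⟩
  rw [ffun, hset]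
  have hstep : ∀ p ∈ j.primeFactors.filter (fun p => 2 < p),
      ((p : ℝ) - 1) / ((p : ℝ) - 2) = 1 / ((p : ℝ) - 2) + 1 := by
    intro p hp
    have h2 : 2 < p := (Finset.mem_filter.mp hp).2
    have h2' : (2 : ℝ) < (p : ℝ) := by exact_mod_cast h2
    have hne : (p : ℝ) - 2 ≠ 0 := by linarith
    field_simp
    ring
  rw [Finset.prod_congr rfl hstep, Finset.prod_add]
  simp only [Finset.prod_const_one, mul_one]
  rw [← Finset.sum_filter_of_ne
    (s := j.divisors) (f := gfun)
    (p := fun m => Squarefree m ∧ Odd m)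
    (fun m _ hne => by
      by_contra hcon
      exact hne (by simp only [gfun, if_neg hcon]))]
  refine Finset.sum_nbij' (fun T => ∏ p ∈ T, p) (fun m => m.primeFactors) ?_ ?_ ?_ ?_ ?_
  · intro T hT
    have hTs := Finset.mem_powerset.mp hT
    have hall : ∀ p ∈ T, p.Prime ∧ 2 < p ∧ p ∣ j := by
      intro p hp
      have := Finset.mem_filter.mp (hTs hp)
      exact ⟨Nat.prime_of_mem_primeFactors this.1, this.2, Nat.dvd_of_mem_primeFactors this.1⟩
    have hdvd : (∏ p ∈ T, p) ∣ j :=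
      Finset.prod_primes_dvd j (fun p hp => (hall p hp).1.prime) (fun p hp => (hall p hp).2.2)
    have hsq : Squarefree (∏ p ∈ T, p) := squarefree_prod_primes fun p hp => (hall p hp).1
    have hodd : Odd (∏ p ∈ T, p) := by
      rw [← Nat.not_even_iff_odd, even_iff_two_dvd]
      intro h2d
      obtain ⟨q, hq, hq2⟩ := (Nat.prime_two.prime.dvd_finset_prod_iff id).mp h2d
      have heq := (Nat.prime_dvd_prime_iff_eq Nat.prime_two (hall q hq).1).mp hq2
      have hgt := (hall q hq).2.1
      omega
    exact Finset.mem_filter.mpr ⟨Nat.mem_divisors.mpr ⟨hdvd, hj⟩, hsq, hodd⟩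
  · intro m hm
    obtain ⟨hmdiv, hsq, hodd⟩ := Finset.mem_filter.mp hm
    obtain ⟨hmj, -⟩ := Nat.mem_divisors.mp hmdiv
    refine Finset.mem_powerset.mpr fun p hp => ?_
    have hpm := Nat.dvd_of_mem_primeFactors hp
    have hpP := Nat.prime_of_mem_primeFactors hp
    have hp2 : 2 < p := by
      rcases Nat.lt_or_ge p 3 with h | h
      · interval_cases p
        · exact absurd hpP (by norm_num)
        · exact absurd hpP (by norm_num)
        · exfalso
          rw [← Nat.not_even_iff_odd, even_iff_two_dvd] at hodd
          exact hodd hpm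
      · omega
    refine Finset.mem_filter.mpr ⟨Nat.mem_primeFactors.mpr ⟨hpP, hpm.trans hmj, hj⟩, hp2⟩
  · intro T hT
    exact Nat.primeFactors_prod fun p hp =>
      Nat.prime_of_mem_primeFactors (Finset.mem_filter.mp (Finset.mem_powerset.mp hT hp)).1
  · intro m hm
    exact Nat.prod_primeFactors_of_squarefree (Finset.mem_filter.mp hm).2.1
  · intro T hT
    have hall : ∀ p ∈ T, p.Prime := fun p hp =>
      Nat.prime_of_mem_primeFactors (Finset.mem_filter.mp (Finset.mem_powerset.mp hT hp)).1
    have hsq : Squarefree (∏ p ∈ T, p) := squarefree_prod_primes hall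
    have hodd : Odd (∏ p ∈ T, p) := by
      rw [← Nat.not_even_iff_odd, even_iff_two_dvd]
      intro h2d
      obtain ⟨q, hq, hq2⟩ := (Nat.prime_two.prime.dvd_finset_prod_iff id).mp h2d
      have heq := (Nat.prime_dvd_prime_iff_eq Nat.prime_two (hall q hq)).mp hq2
      have hgt := (Finset.mem_filter.mp (Finset.mem_powerset.mp hT hq)).2
      omega
    simp only [gfun, if_pos (And.intro hsq hodd), Nat.primeFactors_prod hall]

lemma swap_sum (M : ℕ) (f : ℕ → ℕ → ℝ) :
    ∑ j ∈ Finset.Icc 1 M, ∑ m ∈ j.divisors, f m j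
      = ∑ m ∈ Finset.Icc 1 M, ∑ t ∈ Finset.Icc 1 (M / m), f m (m * t) := by
  classical
  rw [Finset.sum_sigma', Finset.sum_sigma']
  refine Finset.sum_nbij' (fun x => ⟨x.2, x.1 / x.2⟩) (fun x => ⟨x.1 * x.2, x.1⟩) ?_ ?_ ?_ ?_ ?_
  · rintro ⟨j, m⟩ hx
    obtain ⟨hj, hm⟩ := Finset.mem_sigma.mp hx
    dsimp only at hj hm ⊢
    obtain ⟨hmj, hj0⟩ := Nat.mem_divisors.mp hm
    obtain ⟨hj1, hjM⟩ := Finset.mem_Icc.mp hj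
    have hm0 : 0 < m := Nat.pos_of_dvd_of_pos hmj (by omega)
    have hmle : m ≤ j := Nat.le_of_dvd (by omega) hmj
    refine Finset.mem_sigma.mpr ⟨Finset.mem_Icc.mpr ⟨hm0, hmle.trans hjM⟩,
      Finset.mem_Icc.mpr ⟨?_, Nat.div_le_div_right hjM⟩⟩
    rw [Nat.one_le_div_iff hm0]
    exact hmle
  · rintro ⟨m, t⟩ hx
    obtain ⟨hm, ht⟩ := Finset.mem_sigma.mp hx
    dsimp only at hm ht ⊢
    obtain ⟨hm1, hmM⟩ := Finset.mem_Icc.mp hm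
    obtain ⟨ht1, htM⟩ := Finset.mem_Icc.mp ht
    refine Finset.mem_sigma.mpr ⟨Finset.mem_Icc.mpr ⟨?_, ?_⟩,
      Nat.mem_divisors.mpr ⟨dvd_mul_right m t, ?_⟩⟩
    · exact Nat.one_le_iff_ne_zero.mpr (by positivity)
    · calc m * t ≤ m * (M / m) := Nat.mul_le_mul_left m htM
        _ ≤ M := by rw [mul_comm]; exact Nat.div_mul_le_self M m
    · positivity
  · rintro ⟨j, m⟩ hx
    obtain ⟨hj, hm⟩ := Finset.mem_sigma.mp hx
    obtain ⟨hmj, hj0⟩ := Nat.mem_divisors.mp hm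
    simp only [Sigma.mk.inj_iff, heq_eq_eq, and_true]
    exact Nat.mul_div_cancel' hmj
  · rintro ⟨m, t⟩ hx
    obtain ⟨hm, ht⟩ := Finset.mem_sigma.mp hx
    dsimp only at hm ht ⊢
    obtain ⟨hm1, hmM⟩ := Finset.mem_Icc.mp hm
    simp only [Sigma.mk.inj_iff, heq_eq_eq, true_and]
    exact Nat.mul_div_cancel_left t (by omega)
  · rintro ⟨j, m⟩ hx
    obtain ⟨hj, hm⟩ := Finset.mem_sigma.mp hx
    obtain ⟨hmj, hj0⟩ := Nat.mem_divisors.mp hm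
    simp only
    rw [Nat.mul_div_cancel' hmj]

lemma gauss (T : ℕ) : ∑ t ∈ Finset.Icc 1 T, (t : ℝ) = T * (T + 1) / 2 := by
  induction T with
  | zero => simp
  | succ n ih =>
    rw [Finset.sum_Icc_succ_top (by omega), ih]
    push_cast
    ring

lemma inner_bound (K m T : ℕ) (hm : 1 ≤ m) :
    ∑ t ∈ Finset.Icc 1 T, ((K : ℝ) - 2 * ((m * t : ℕ) : ℝ)) ≤ (K : ℝ) ^ 2 / (4 * m) := by
  have h1 : ∑ t ∈ Finset.Icc 1 T, ((K : ℝ) - 2 * ((m * t : ℕ) : ℝ))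
      = (Finset.Icc 1 T).card * (K : ℝ) - 2 * (m : ℝ) * ∑ t ∈ Finset.Icc 1 T, (t : ℝ) := by
    rw [Finset.sum_sub_distrib, Finset.sum_const, nsmul_eq_mul, Finset.mul_sum]
    congr 1
    refine Finset.sum_congr rfl fun t _ => ?_
    push_cast
    ring
  rw [h1, gauss, Nat.card_Icc]
  simp only [Nat.add_sub_cancel]
  have hm' : (1 : ℝ) ≤ (m : ℝ) := by exact_mod_cast hm
  have hT : (0 : ℝ) ≤ (T : ℝ) := Nat.cast_nonneg T
  rw [le_div_iff₀ (by linarith)]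
  nlinarith [sq_nonneg ((K : ℝ) - 2 * (m : ℝ) * (T : ℝ)),
    mul_nonneg (mul_nonneg (le_trans zero_le_one hm') (le_trans zero_le_one hm')) hT]


lemma sum_gfun_div_le (M : ℕ) :
    ∑ m ∈ Finset.Icc 1 M, gfun m * (1 / (m : ℝ)) ≤ 1 / twinC := by
  classical
  set c : ℕ → ℝ := fun p => 1 / (((p : ℝ) - 2) * (p : ℝ)) with hc
  set Q := (Finset.Icc 1 M).filter (fun p => p.Prime ∧ 2 < p) with hQdef
  have hQ : ∀ p ∈ Q, p.Prime ∧ 2 < p := fun p hp => (Finset.mem_filter.mp hp).2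
  have step1 : ∑ m ∈ Finset.Icc 1 M, gfun m * (1 / (m : ℝ))
      = ∑ m ∈ (Finset.Icc 1 M).filter (fun m => Squarefree m ∧ Odd m),
          ∏ p ∈ m.primeFactors, c p := by
    rw [← Finset.sum_filter_of_ne (s := Finset.Icc 1 M)
      (f := fun m => gfun m * (1 / (m : ℝ)))
      (p := fun m => Squarefree m ∧ Odd m)
      (fun m _ hne => by
        by_contra hcon
        exact hne (by simp only [gfun, if_neg hcon, zero_mul]))]
    refine Finset.sum_congr rfl fun m hm => ?_
    obtain ⟨hmI, hsq, hodd⟩ := Finset.mem_filter.mp hm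
    simp only [gfun, if_pos (And.intro hsq hodd)]
    have hm0 : (m : ℝ) = ∏ p ∈ m.primeFactors, (p : ℝ) := by
      rw [← Nat.cast_prod, Nat.prod_primeFactors_of_squarefree hsq]
    have hone : (1 : ℝ) / ∏ p ∈ m.primeFactors, (p : ℝ)
        = ∏ p ∈ m.primeFactors, (1 / (p : ℝ)) := by
      rw [Finset.prod_div_distrib, Finset.prod_const_one]
    rw [hm0, hone, ← Finset.prod_mul_distrib]
    exact Finset.prod_congr rfl fun p hp => by
      simp only [hc, div_mul_div_comm, one_mul]
  rw [step1]
  have hinj : ∀ a ∈ (Finset.Icc 1 M).filter (fun m => Squarefree m ∧ Odd m),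
      ∀ b ∈ (Finset.Icc 1 M).filter (fun m => Squarefree m ∧ Odd m),
      a.primeFactors = b.primeFactors → a = b := by
    intro a ha b hb h
    have hsa := (Finset.mem_filter.mp ha).2.1
    have hsb := (Finset.mem_filter.mp hb).2.1
    rw [← Nat.prod_primeFactors_of_squarefree hsa, ← Nat.prod_primeFactors_of_squarefree hsb, h]
  have himg := Finset.sum_image (f := fun T => ∏ p ∈ T, c p)
    (g := fun m : ℕ => m.primeFactors) hinj
  rw [← himg]
  have hsub : ((Finset.Icc 1 M).filter (fun m => Squarefree m ∧ Odd m)).image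
      (fun m => m.primeFactors) ⊆ Q.powerset := by
    intro T hT
    obtain ⟨m, hm, rfl⟩ := Finset.mem_image.mp hT
    obtain ⟨hmI, hsq, hodd⟩ := Finset.mem_filter.mp hm
    obtain ⟨hm1, hmM⟩ := Finset.mem_Icc.mp hmI
    refine Finset.mem_powerset.mpr fun p hp => ?_
    have hpP := Nat.prime_of_mem_primeFactors hp
    have hpm := Nat.dvd_of_mem_primeFactors hp
    have hp2 : 2 < p := by
      rcases Nat.lt_or_ge p 3 with h | h
      · interval_cases p
        · exact absurd hpP (by norm_num)
        · exact absurd hpP (by norm_num)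
        · exfalso
          rw [← Nat.not_even_iff_odd, even_iff_two_dvd] at hodd
          exact hodd hpm
      · omega
    have hpM : p ≤ M := le_trans (Nat.le_of_dvd (by omega) hpm) hmM
    exact Finset.mem_filter.mpr ⟨Finset.mem_Icc.mpr ⟨hpP.pos, hpM⟩, hpP, hp2⟩
  have hcnonneg : ∀ T ∈ Q.powerset, 0 ≤ ∏ p ∈ T, c p := by
    intro T hT
    refine Finset.prod_nonneg fun p hp => ?_
    have h3 : 3 ≤ p := (hQ p (Finset.mem_powerset.mp hT hp)).2
    have h3' : (3 : ℝ) ≤ (p : ℝ) := by exact_mod_cast h3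
    have : (0 : ℝ) ≤ ((p : ℝ) - 2) * (p : ℝ) := by nlinarith
    exact one_div_nonneg.mpr this
  refine le_trans (Finset.sum_le_sum_of_subset_of_nonneg hsub
    (fun T hT _ => hcnonneg T hT)) ?_
  have hexp : ∑ T ∈ Q.powerset, ∏ p ∈ T, c p = ∏ p ∈ Q, (c p + 1) := by
    rw [Finset.prod_add]
    simp
  rw [hexp]
  set P := ∏ p ∈ Q, (1 - 1 / ((p : ℝ) - 1) ^ 2) with hP
  have hfac : ∀ p ∈ Q, 0 < 1 - 1 / ((p : ℝ) - 1) ^ 2 := by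
    intro p hp
    have h3 : 3 ≤ p := (hQ p hp).2
    have h3' : (3 : ℝ) ≤ (p : ℝ) := by exact_mod_cast h3
    have hle : 1 / ((p : ℝ) - 1) ^ 2 ≤ 1 / 4 := by
      rw [div_le_div_iff₀ (by nlinarith) (by norm_num)]
      nlinarith
    linarith
  have hPpos : 0 < P := Finset.prod_pos hfac
  have hkey : (∏ p ∈ Q, (c p + 1)) * P = 1 := by
    rw [hP, ← Finset.prod_mul_distrib]
    refine Finset.prod_eq_one fun p hp => ?_
    have h3 : 3 ≤ p := (hQ p hp).2
    have h3' : (3 : ℝ) ≤ (p : ℝ) := by exact_mod_cast h3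
    have h1 : (p : ℝ) - 2 ≠ 0 := by linarith
    have h2 : (p : ℝ) ≠ 0 := by linarith
    have h4 : (p : ℝ) - 1 ≠ 0 := by linarith
    simp only [hc]
    field_simp
    ring
  have hPle : twinC ≤ P := twinC_le_prod_nat Q hQ
  have heq : ∏ p ∈ Q, (c p + 1) = 1 / P := (eq_div_iff hPpos.ne').mpr hkey
  rw [heq]
  exact one_div_le_one_div_of_le twinC_pos hPle

/-- for every integer `K ≥ 2`,
`∑_{j=1}^{⌊(K-1)/2⌋} f(2j)(K - 2j) ≤ K²/(4C₂)`. -/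
theorem triangular_sum_f_bound (K : ℕ) (hK : 2 ≤ K) :
    ∑ j ∈ Finset.Icc 1 ((K - 1) / 2), ffun (2 * j) * ((K : ℝ) - 2 * j)
      ≤ (K : ℝ) ^ 2 / (4 * twinC) := by
  classical
  set M := (K - 1) / 2 with hM
  have h1 : ∑ j ∈ Finset.Icc 1 M, ffun (2 * j) * ((K : ℝ) - 2 * j)
      = ∑ j ∈ Finset.Icc 1 M, ∑ m ∈ j.divisors, gfun m * ((K : ℝ) - 2 * j) := by
    refine Finset.sum_congr rfl fun j hj => ?_
    rw [ffun_eq (by have := (Finset.mem_Icc.mp hj).1; omega), Finset.sum_mul]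
  rw [h1, swap_sum M (fun m j => gfun m * ((K : ℝ) - 2 * (j : ℝ)))]
  have h2 : ∀ m ∈ Finset.Icc 1 M,
      ∑ t ∈ Finset.Icc 1 (M / m), gfun m * ((K : ℝ) - 2 * ((m * t : ℕ) : ℝ))
        ≤ gfun m * ((K : ℝ) ^ 2 / (4 * m)) := by
    intro m hm
    rw [← Finset.mul_sum]
    exact mul_le_mul_of_nonneg_left
      (inner_bound K m (M / m) (Finset.mem_Icc.mp hm).1) (gfun_nonneg m)
  refine le_trans (Finset.sum_le_sum h2) ?_
  have h3 : ∑ m ∈ Finset.Icc 1 M, gfun m * ((K : ℝ) ^ 2 / (4 * m))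
      = ((K : ℝ) ^ 2 / 4) * ∑ m ∈ Finset.Icc 1 M, gfun m * (1 / (m : ℝ)) := by
    rw [Finset.mul_sum]
    refine Finset.sum_congr rfl fun m hm => ?_
    rw [← div_div, div_eq_mul_one_div ((K : ℝ) ^ 2 / 4) (m : ℝ)]
    ring
  rw [h3]
  calc ((K : ℝ) ^ 2 / 4) * ∑ m ∈ Finset.Icc 1 M, gfun m * (1 / (m : ℝ))
      ≤ ((K : ℝ) ^ 2 / 4) * (1 / twinC) :=
        mul_le_mul_of_nonneg_left (sum_gfun_div_le M) (by positivity)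
    _ = (K : ℝ) ^ 2 / (4 * twinC) := by
        rw [div_mul_div_comm, mul_one]
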